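/- For every TUX game w on N and player j ∈ N, the average game of the HM-reduced TUX game (with respect to MPW) equals the HM-reduced TU game of the average game (with respect to Sh): v̄_{w_{−j}^{HM,MPW}}(S) = v̄_w(S∪{j}) − Sh_j( v̄_{w_{−(N\(S∪{j}))}} ) = (v̄_w)_{−j}^{HM,Sh}(S) for all S ⊆ N\{j}. -/

import Mathlib

open Finset BigOperators

namespace TUX

/-- A (raw) game in partition function form: assigns a real worth to each
coalition together with a partition (of the outside players). -/
abbrev Game := Finset ℕ → Finset (Finset ℕ) → ℝ

/-- A TU game (characteristic function). -/
abbrev TUGame := Finset ℕ → ℝ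

/-- A solution for TUX games: given a player set and a game, assigns payoffs. -/
abbrev Sol := Finset ℕ → Game → ℕ → ℝ

/-- `w` is a genuine TUX game: the empty coalition has worth 0. -/
def IsTUX (w : Game) : Prop := ∀ π, w ∅ π = 0

/-- `π` is a partition of the finite set `M`. -/
def IsPartition (M : Finset ℕ) (π : Finset (Finset ℕ)) : Prop :=
  (∀ B ∈ π, B ⊆ M) ∧ ∅ ∉ π ∧ ∀ x ∈ M, (π.filter (fun B => x ∈ B)).card = 1

instance (M : Finset ℕ) : DecidablePred (IsPartition M) := fun π => by
  unfold IsPartition; infer_instance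

/-- The finite set of all partitions of `M`. -/
def partitionsOf (M : Finset ℕ) : Finset (Finset (Finset ℕ)) :=
  (M.powerset.powerset).filter (IsPartition M)

/-- The Ewens(θ = 1) probability of the partition `π` of `M`:
`p*_M(π) = ∏_{B ∈ π} (|B| - 1)! / |M|!`. -/
noncomputable def pstar (M : Finset ℕ) (π : Finset (Finset ℕ)) : ℝ :=
  (∏ B ∈ π, ((B.card - 1).factorial : ℝ)) / (M.card.factorial : ℝ)

/-- The block of `π` containing `j` (junk if `π` is not a partition containing `j`). -/
def blockOf (π : Finset (Finset ℕ)) (j : ℕ) : Finset ℕ :=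
  (π.filter (fun B => j ∈ B)).sup id

/-- Add player `i` to the block `B` of `π`. -/
def addToBlock (π : Finset (Finset ℕ)) (i : ℕ) (B : Finset ℕ) : Finset (Finset ℕ) :=
  insert (insert i B) (π.erase B)

/-- The restriction operator `r⋆` removing a single player `i` from a game on `N`:
`w₋ᵢ(S,π) = (1/(n-s)) (w(S, π₊ᵢ⇝∅) + ∑_{j ∈ N∖(S∪{i})} w(S, π₊ᵢ⇝π(j)))`. -/
noncomputable def restrict1 (N : Finset ℕ) (w : Game) (i : ℕ) : Game :=
  fun S π =>
    ((N.card : ℝ) - (S.card : ℝ))⁻¹ *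
      (w S (insert {i} π) + ∑ j ∈ (N \ S).erase i, w S (addToBlock π i (blockOf π j)))

/-- Iterated removal of a list of players. -/
noncomputable def restrictL : Finset ℕ → Game → List ℕ → Game
  | _, w, [] => w
  | N, w, i :: l => restrictL (N.erase i) (restrict1 N w i) l

/-- Removal of a set of players (via the increasing enumeration; by path
independence of `r⋆` the order is immaterial). -/
noncomputable def restrictSet (N : Finset ℕ) (w : Game) (T : Finset ℕ) : Game :=
  restrictL N w (T.sort (· ≤ ·))

/-- The average TU game `v̄_w` of a TUX game `w` on `N`. -/
noncomputable def avg (N : Finset ℕ) (w : Game) : TUGame :=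
  fun S => ∑ π ∈ partitionsOf (N \ S), pstar (N \ S) π * w S π

/-- The auxiliary TU game `v*_w(S) = w₋(N∖S)(S,∅)`. -/
noncomputable def auxGame (N : Finset ℕ) (w : Game) : TUGame :=
  fun S => restrictSet N w (N \ S) S ∅

/-- The Shapley value of a TU game on player set `N`. -/
noncomputable def shapley (N : Finset ℕ) (v : TUGame) (i : ℕ) : ℝ :=
  ∑ S ∈ (N.erase i).powerset,
    (((S.card.factorial : ℝ) * ((N.card - S.card - 1).factorial : ℝ)) / (N.card.factorial : ℝ)) *
      (v (insert i S) - v S)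

/-- The MPW solution: the Shapley value of the average game. -/
noncomputable def MPW (N : Finset ℕ) (w : Game) (i : ℕ) : ℝ := shapley N (avg N w) i

/-- The MPW solution as a solution for TUX games. -/
noncomputable def MPWsol : Sol := fun N w i => MPW N w i

/-- The scaled Dirac TUX game `δ_{T,τ}` on `N`. -/
noncomputable def scaledDirac (N T : Finset ℕ) (τ : Finset (Finset ℕ)) : Game :=
  fun S π => if S = T ∧ π = τ then (pstar (N \ T) τ)⁻¹ else 0

/-- `τ₋S`: remove the players of `S` from each block of `τ`, discarding empty blocks. -/
def partRemove (τ : Finset (Finset ℕ)) (S : Finset ℕ) : Finset (Finset ℕ) :=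
  (τ.image (fun B => B \ S)).erase ∅

/-- The Sobolev-reduced TUX game `w₋ⱼ^{So,φ}` on `N ∖ {j}`. -/
noncomputable def sobRed (N : Finset ℕ) (φ : Sol) (w : Game) (j : ℕ) : Game :=
  fun S π =>
    ((S.card : ℝ) / ((N.card : ℝ) - 1)) * (w (insert j S) π - φ N w j) +
      (1 - (S.card : ℝ) / ((N.card : ℝ) - 1)) * restrict1 N w j S π

/-- The Hart–Mas-Colell reduced TUX game `w₋T^{HM,φ}` on `N ∖ T`. -/
noncomputable def hmRed (N : Finset ℕ) (φ : Sol) (w : Game) (T : Finset ℕ) : Game :=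
  fun S π => w (S ∪ T) π - ∑ j ∈ T, φ (S ∪ T) (restrictSet N w (N \ (S ∪ T))) j

/-- Efficiency for TUX games. -/
def EfficientX (φ : Sol) : Prop :=
  ∀ (N : Finset ℕ) (w : Game), IsTUX w → ∑ i ∈ N, φ N w i = w N ∅

/-- Balanced contributions for TUX games (w.r.t. the restriction operator `r⋆`). -/
def BalancedContributionsX (φ : Sol) : Prop :=
  ∀ (N : Finset ℕ) (w : Game), IsTUX w → ∀ i ∈ N, ∀ j ∈ N,
    φ N w i - φ (N.erase j) (restrict1 N w j) i
      = φ N w j - φ (N.erase i) (restrict1 N w i) j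

/-- 2-standardness for TUX games. -/
def TwoStandardX (φ : Sol) : Prop :=
  ∀ i j : ℕ, i ≠ j → ∀ w : Game, IsTUX w →
    φ {i, j} w i
      = w {i} {({j} : Finset ℕ)}
        + (w {i, j} ∅ - w {j} {({i} : Finset ℕ)} - w {i} {({j} : Finset ℕ)}) / 2

/-- Sobolev consistency for TUX games. -/
def SobolevConsistentX (φ : Sol) : Prop :=
  ∀ (N : Finset ℕ) (w : Game), IsTUX w → ∀ i ∈ N, ∀ j ∈ N, i ≠ j →
    φ N w i = φ (N.erase j) (sobRed N φ w j) i

/-- Hart–Mas-Colell consistency (single-player removal) for TUX games. -/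
def HMConsistentX (φ : Sol) : Prop :=
  ∀ (N : Finset ℕ) (w : Game), IsTUX w → ∀ i ∈ N, ∀ j ∈ N, i ≠ j →
    φ N w i = φ (N.erase j) (hmRed N φ w {j}) i

/-- Set Hart–Mas-Colell consistency (removal of a coalition) for TUX games. -/
def SetHMConsistentX (φ : Sol) : Prop :=
  ∀ (N : Finset ℕ) (w : Game), IsTUX w → ∀ i ∈ N, ∀ T ⊆ N.erase i,
    φ N w i = φ (N \ T) (hmRed N φ w T) i

/-- The finite set of embedded coalitions `(T,τ)` of `N` with `T ≠ ∅`. -/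
def embeddedNE (N : Finset ℕ) : Finset (Finset ℕ × Finset (Finset ℕ)) :=
  (N.powerset ×ˢ N.powerset.powerset).filter
    (fun p => p.1.Nonempty ∧ IsPartition (N \ p.1) p.2)

/-! The `HM`-reduced game subtracts from `w (S ∪ {j}) π` a number that does not depend on `π`;
since the Ewens weights form a probability distribution, averaging merely subtracts that number.
It remains to see that averaging commutes with the restriction `r⋆`. This is the Chinese restaurant
description of the Ewens(1) law: a random partition of `insert i G` arises from one of `G` by
putting `i` in a new block or next to a uniformly chosen `x ∈ G`, each of the `|G| + 1` choices
having probability `1 / (|G| + 1)`, and this is precisely the averaging performed by `r⋆`. -/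

variable {M G B C : Finset ℕ} {π σ : Finset (Finset ℕ)} {i x : ℕ}

theorem mem_partitionsOf : π ∈ partitionsOf M ↔ IsPartition M π := by
  simp only [partitionsOf, mem_filter, and_iff_right_iff_imp]
  exact fun h => mem_powerset.mpr fun B hB => mem_powerset.mpr (h.1 B hB)

theorem isPartition_iff : IsPartition M π ↔ (∀ B ∈ π, B ⊆ M) ∧ ∅ ∉ π ∧
    (∀ x ∈ M, ∃ B ∈ π, x ∈ B) ∧ ∀ B ∈ π, ∀ C ∈ π, ∀ x ∈ B, x ∈ C → B = C := by
  simp only [IsPartition, card_eq_one, eq_singleton_iff_unique_mem, mem_filter]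
  constructor
  · rintro ⟨hsub, hempty, hunique⟩
    refine ⟨hsub, hempty, fun x hx => ?_, fun B hB C hC x hxB hxC => ?_⟩
    · obtain ⟨B, ⟨hB, hxB⟩, -⟩ := hunique x hx
      exact ⟨B, hB, hxB⟩
    · obtain ⟨D, -, hD⟩ := hunique x (hsub B hB hxB)
      rw [hD B ⟨hB, hxB⟩, hD C ⟨hC, hxC⟩]
  · rintro ⟨hsub, hempty, hcover, hdisj⟩
    refine ⟨hsub, hempty, fun x hx => ?_⟩
    obtain ⟨B, hB, hxB⟩ := hcover x hx
    exact ⟨B, ⟨hB, hxB⟩, fun C ⟨hC, hxC⟩ => hdisj C hC B hB x hxC hxB⟩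

namespace IsPartition

theorem subset (h : IsPartition M π) (hB : B ∈ π) : B ⊆ M := h.1 B hB

theorem empty_notMem (h : IsPartition M π) : ∅ ∉ π := h.2.1

theorem eq_of_mem_of_mem (h : IsPartition M π) (hB : B ∈ π) (hC : C ∈ π) (hxB : x ∈ B)
    (hxC : x ∈ C) : B = C :=
  (isPartition_iff.mp h).2.2.2 B hB C hC x hxB hxC

theorem blockOf_eq (h : IsPartition M π) (hB : B ∈ π) (hxB : x ∈ B) : blockOf π x = B := by
  have : π.filter (fun C => x ∈ C) = {B} := by
    ext C
    simp only [mem_filter, mem_singleton]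
    exact ⟨fun hC => h.eq_of_mem_of_mem hC.1 hB hC.2 hxB, fun hC => hC ▸ ⟨hB, hxB⟩⟩
  rw [blockOf, this, sup_singleton, id]

theorem blockOf_mem (h : IsPartition M π) (hx : x ∈ M) : blockOf π x ∈ π ∧ x ∈ blockOf π x := by
  obtain ⟨B, hB, hxB⟩ := (isPartition_iff.mp h).2.2.1 x hx
  rw [h.blockOf_eq hB hxB]
  exact ⟨hB, hxB⟩

theorem sum_blockOf {β : Type*} [AddCommMonoid β] (h : IsPartition M π) (f : Finset ℕ → β) :
    ∑ x ∈ M, f (blockOf π x) = ∑ B ∈ π, B.card • f B := by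
  have hM : M = π.biUnion id := by
    ext x
    simp only [mem_biUnion, id]
    exact ⟨fun hx => ⟨_, h.blockOf_mem hx⟩, fun ⟨B, hB, hxB⟩ => h.subset hB hxB⟩
  rw [hM, sum_biUnion (t := id) fun B hB C hC hBC => disjoint_left.mpr fun x hxB hxC =>
    hBC (h.eq_of_mem_of_mem hB hC hxB hxC)]
  refine sum_congr rfl fun B hB => ?_
  rw [sum_congr rfl fun x hx => by rw [h.blockOf_eq hB hx], sum_const, id]

theorem ne_empty_of_mem (h : IsPartition M π) (hB : B ∈ π) : B ≠ ∅ :=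
  fun hB0 => h.empty_notMem (hB0 ▸ hB)

theorem subset_of_mem_insert_empty (h : IsPartition M π) (hB : B ∈ insert ∅ π) : B ⊆ M := by
  rcases mem_insert.mp hB with rfl | hB
  exacts [empty_subset M, h.subset hB]

end IsPartition

theorem addToBlock_empty (h : ∅ ∉ π) : addToBlock π i ∅ = insert {i} π := by
  rw [addToBlock, erase_eq_of_notMem h]; rfl

theorem mem_addToBlock : C ∈ addToBlock π i B ↔ C = insert i B ∨ C ≠ B ∧ C ∈ π := by
  rw [addToBlock, mem_insert, mem_erase]

theorem isPartition_addToBlock (h : IsPartition G π) (hi : i ∉ G) (hB : B ∈ insert ∅ π) :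
    IsPartition (insert i G) (addToBlock π i B) := by
  have hBG := h.subset_of_mem_insert_empty hB
  rw [isPartition_iff] at h ⊢
  obtain ⟨hsub, hempty, hcover, hdisj⟩ := h
  refine ⟨?_, ?_, ?_, ?_⟩
  · intro C hC
    rcases mem_addToBlock.mp hC with rfl | ⟨-, hC⟩
    exacts [insert_subset_insert i hBG, (hsub C hC).trans (subset_insert i G)]
  · intro hC
    rcases mem_addToBlock.mp hC with hC | ⟨-, hC⟩
    exacts [insert_ne_empty i B hC.symm, hempty hC]
  · intro x hx
    rcases mem_insert.mp hx with rfl | hx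
    · exact ⟨_, mem_addToBlock.mpr (Or.inl rfl), mem_insert_self x B⟩
    by_cases hxB : x ∈ B
    · exact ⟨_, mem_addToBlock.mpr (Or.inl rfl), mem_insert_of_mem hxB⟩
    obtain ⟨C, hC, hxC⟩ := hcover x hx
    exact ⟨C, mem_addToBlock.mpr (Or.inr ⟨by rintro rfl; exact hxB hxC, hC⟩), hxC⟩
  · have hapart : ∀ D ∈ π, D ≠ B → ∀ x ∈ insert i B, x ∉ D := by
      intro D hD hDB x hx hxD
      rcases mem_insert.mp hx with rfl | hxB
      · exact hi (hsub D hD hxD)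
      rcases mem_insert.mp hB with rfl | hB
      exacts [notMem_empty x hxB, hDB (hdisj D hD B hB x hxD hxB)]
    intro C hC D hD x hxC hxD
    rcases mem_addToBlock.mp hC with rfl | ⟨hCB, hC⟩ <;>
      rcases mem_addToBlock.mp hD with rfl | ⟨hDB, hD⟩
    · rfl
    · exact absurd hxD (hapart D hD hDB x hxC)
    · exact absurd hxC (hapart C hC hCB x hxD)
    · exact hdisj C hC D hD x hxC hxD

theorem blockOf_addToBlock (h : IsPartition G π) (hi : i ∉ G) (hB : B ∈ insert ∅ π) :
    blockOf (addToBlock π i B) i = insert i B :=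
  (isPartition_addToBlock h hi hB).blockOf_eq (mem_addToBlock.mpr (Or.inl rfl))
    (mem_insert_self i B)

theorem mem_partRemove {S : Finset ℕ} : C ∈ partRemove σ S ↔ C ≠ ∅ ∧ ∃ D ∈ σ, D \ S = C := by
  rw [partRemove, mem_erase, mem_image]

theorem isPartition_partRemove (h : IsPartition M σ) (S : Finset ℕ) :
    IsPartition (M \ S) (partRemove σ S) := by
  rw [isPartition_iff] at h ⊢
  obtain ⟨hsub, -, hcover, hdisj⟩ := h
  refine ⟨?_, fun h => (mem_partRemove.mp h).1 rfl, fun x hx => ?_, ?_⟩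
  · rintro _ hC
    obtain ⟨-, D, hD, rfl⟩ := mem_partRemove.mp hC
    exact sdiff_subset_sdiff (hsub D hD) le_rfl
  · obtain ⟨hxM, hxS⟩ := mem_sdiff.mp hx
    obtain ⟨D, hD, hxD⟩ := hcover x hxM
    have hxDS : x ∈ D \ S := mem_sdiff.mpr ⟨hxD, hxS⟩
    exact ⟨D \ S, mem_partRemove.mpr ⟨ne_empty_of_mem hxDS, D, hD, rfl⟩, hxDS⟩
  · rintro _ hC _ hC' x hxC hxC'
    obtain ⟨-, D, hD, rfl⟩ := mem_partRemove.mp hC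
    obtain ⟨-, D', hD', rfl⟩ := mem_partRemove.mp hC'
    rw [hdisj D hD D' hD' x (mem_sdiff.mp hxC).1 (mem_sdiff.mp hxC').1]

theorem partRemove_addToBlock (h : IsPartition G π) (hi : i ∉ G) (hB : B ∈ insert ∅ π) :
    partRemove (addToBlock π i B) {i} = π := by
  have hiB : i ∉ B := fun hiB => hi (h.subset_of_mem_insert_empty hB hiB)
  have hsdiff : ∀ D ∈ π, D \ {i} = D := fun D hD =>
    sdiff_eq_left.mpr (disjoint_singleton_right.mpr fun hiD => hi (h.subset hD hiD))
  ext C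
  rw [mem_partRemove]
  constructor
  · rintro ⟨hC, D, hD, rfl⟩
    rcases mem_addToBlock.mp hD with rfl | ⟨-, hD⟩
    · rw [sdiff_singleton_eq_erase, erase_insert hiB] at hC ⊢
      exact (mem_insert.mp hB).resolve_left hC
    · rwa [hsdiff D hD]
  · intro hC
    refine ⟨h.ne_empty_of_mem hC, ?_⟩
    by_cases hCB : C = B
    · subst hCB
      exact ⟨_, mem_addToBlock.mpr (Or.inl rfl), by rw [sdiff_singleton_eq_erase, erase_insert hiB]⟩
    · exact ⟨C, mem_addToBlock.mpr (Or.inr ⟨hCB, hC⟩), hsdiff C hC⟩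

theorem erase_blockOf_mem (h : IsPartition M σ) (hi : i ∈ M) :
    (blockOf σ i).erase i ∈ insert ∅ (partRemove σ {i}) := by
  rw [mem_insert, mem_partRemove, ← sdiff_singleton_eq_erase]
  by_cases hB : blockOf σ i \ {i} = ∅
  · exact Or.inl hB
  · exact Or.inr ⟨hB, _, (h.blockOf_mem hi).1, rfl⟩

theorem addToBlock_partRemove (h : IsPartition M σ) (hi : i ∈ M) :
    addToBlock (partRemove σ {i}) i ((blockOf σ i).erase i) = σ := by
  obtain ⟨hB, hiB⟩ := h.blockOf_mem hi
  have hiC : ∀ C ∈ σ, C ≠ blockOf σ i → i ∉ C := fun C hC hCB hiC =>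
    hCB (h.eq_of_mem_of_mem hC hB hiC hiB)
  ext C
  rw [mem_addToBlock, insert_erase hiB, mem_partRemove]
  constructor
  · rintro (rfl | ⟨hCB, hC, D, hD, rfl⟩)
    · exact hB
    by_cases hDB : D = blockOf σ i
    · exact absurd (hDB ▸ sdiff_singleton_eq_erase i D) hCB
    · rwa [sdiff_eq_left.mpr (disjoint_singleton_right.mpr (hiC D hD hDB))]
  · intro hC
    refine or_iff_not_imp_left.mpr fun hCB => ⟨fun hCB' => ?_, ?_, C, hC, ?_⟩
    · obtain ⟨y, hy⟩ := nonempty_iff_ne_empty.mpr (h.ne_empty_of_mem hC)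
      exact hCB (h.eq_of_mem_of_mem hC hB hy (mem_of_mem_erase (hCB' ▸ hy)))
    · exact h.ne_empty_of_mem hC
    · exact sdiff_eq_left.mpr (disjoint_singleton_right.mpr (hiC C hC hCB))

/-- `B = ∅` stands for opening the new block `{i}`, see `addToBlock_empty`. -/
theorem sum_partitionsOf_insert {β : Type*} [AddCommMonoid β] (hi : i ∉ G)
    (f : Finset (Finset ℕ) → β) :
    ∑ σ ∈ partitionsOf (insert i G), f σ
      = ∑ π ∈ partitionsOf G, ∑ B ∈ insert ∅ π, f (addToBlock π i B) := by
  have hG : insert i G \ {i} = G := by rw [sdiff_singleton_eq_erase, erase_insert hi]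
  rw [sum_sigma']
  refine sum_nbij' (fun σ => ⟨partRemove σ {i}, (blockOf σ i).erase i⟩)
    (fun p => addToBlock p.1 i p.2) ?_ ?_ ?_ ?_ ?_
  · intro σ hσ
    have hσ := mem_partitionsOf.mp hσ
    exact mem_sigma.mpr ⟨mem_partitionsOf.mpr (hG ▸ isPartition_partRemove hσ {i}),
      erase_blockOf_mem hσ (mem_insert_self i G)⟩
  · rintro ⟨π, B⟩ hp
    obtain ⟨hπ, hB⟩ := mem_sigma.mp hp
    exact mem_partitionsOf.mpr (isPartition_addToBlock (mem_partitionsOf.mp hπ) hi hB)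
  · intro σ hσ
    exact addToBlock_partRemove (mem_partitionsOf.mp hσ) (mem_insert_self i G)
  · rintro ⟨π, B⟩ hp
    obtain ⟨hπ, hB⟩ := mem_sigma.mp hp
    have hπ := mem_partitionsOf.mp hπ
    have hiB : i ∉ B := fun hiB => hi (hπ.subset_of_mem_insert_empty hB hiB)
    simp only [partRemove_addToBlock hπ hi hB, blockOf_addToBlock hπ hi hB, erase_insert hiB]
  · intro σ hσ
    rw [addToBlock_partRemove (mem_partitionsOf.mp hσ) (mem_insert_self i G)]

theorem pstar_insert_singleton (h : IsPartition G π) (hi : i ∉ G) :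
    pstar (insert i G) (insert {i} π) = ((G.card : ℝ) + 1)⁻¹ * pstar G π := by
  have hπ : {i} ∉ π := fun hi' => hi (h.subset hi' (mem_singleton_self i))
  rw [pstar, pstar, prod_insert hπ, card_insert_of_notMem hi, Nat.factorial_succ]
  push_cast
  simp only [card_singleton, Nat.sub_self, Nat.factorial_zero, Nat.cast_one, one_mul]
  field_simp

theorem pstar_addToBlock (h : IsPartition G π) (hi : i ∉ G) (hB : B ∈ π) :
    pstar (insert i G) (addToBlock π i B) = ((G.card : ℝ) + 1)⁻¹ * (B.card * pstar G π) := by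
  have hiB : i ∉ B := fun hiB => hi (h.subset hB hiB)
  have hB' : insert i B ∉ π.erase B := fun h' =>
    hi (h.subset (mem_of_mem_erase h') (mem_insert_self i B))
  obtain ⟨k, hk⟩ := Nat.exists_eq_succ_of_ne_zero
    (card_ne_zero.mpr (nonempty_iff_ne_empty.mpr (h.ne_empty_of_mem hB)))
  rw [pstar, pstar, addToBlock, prod_insert hB', ← mul_prod_erase π _ hB,
    card_insert_of_notMem hiB, card_insert_of_notMem hi, hk, Nat.factorial_succ, Nat.add_sub_cancel,
    Nat.succ_sub_one, Nat.factorial_succ]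
  push_cast
  field_simp

theorem sum_pstar_mul_insert (hi : i ∉ G) (f : Finset (Finset ℕ) → ℝ) :
    ∑ σ ∈ partitionsOf (insert i G), pstar (insert i G) σ * f σ
      = ∑ π ∈ partitionsOf G, pstar G π * (((G.card : ℝ) + 1)⁻¹ *
          (f (insert {i} π) + ∑ x ∈ G, f (addToBlock π i (blockOf π x)))) := by
  rw [sum_partitionsOf_insert hi]
  refine sum_congr rfl fun π hπ => ?_
  have hπ := mem_partitionsOf.mp hπ
  rw [sum_insert hπ.empty_notMem, addToBlock_empty hπ.empty_notMem,
    hπ.sum_blockOf fun B => f (addToBlock π i B), pstar_insert_singleton hπ hi,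
    sum_congr rfl fun B hB => by rw [pstar_addToBlock hπ hi hB]]
  simp only [nsmul_eq_mul, mul_add, mul_sum]
  ring_nf

theorem partitionsOf_empty : partitionsOf ∅ = {∅} := by
  ext π
  rw [mem_partitionsOf, mem_singleton]
  refine ⟨fun h => eq_empty_of_forall_notMem fun B hB => ?_, ?_⟩
  · exact h.ne_empty_of_mem hB (subset_empty.mp (h.subset hB))
  · rintro rfl
    exact ⟨fun B hB => absurd hB (notMem_empty B), notMem_empty ∅,
      fun x hx => absurd hx (notMem_empty x)⟩

theorem sum_pstar (M : Finset ℕ) : ∑ π ∈ partitionsOf M, pstar M π = 1 := by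
  induction M using Finset.induction_on with
  | empty => simp [partitionsOf_empty, pstar]
  | insert i G hi ih =>
    have h := sum_pstar_mul_insert hi fun _ => 1
    simp only [mul_one, sum_const, nsmul_eq_mul] at h
    rw [h, ← ih]
    refine sum_congr rfl fun π _ => ?_
    field_simp
    ring

theorem avg_restrict1 (w : Game) {M U : Finset ℕ} (hi : i ∈ M) (hU : U ⊆ M.erase i) :
    avg (M.erase i) (restrict1 M w i) U = avg M w U := by
  have hiG : i ∉ M.erase i \ U := notMem_sdiff_of_notMem_left (notMem_erase i M)
  have hMU : M \ U = insert i (M.erase i \ U) := by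
    rw [erase_sdiff_comm, insert_erase (mem_sdiff.mpr ⟨hi, fun h => notMem_erase i M (hU h)⟩)]
  have hcard : (M.card : ℝ) - U.card = (M.erase i \ U).card + 1 := by
    rw [← card_sdiff_add_card_eq_card (hU.trans (erase_subset i M)), hMU, card_insert_of_notMem hiG]
    push_cast
    ring
  rw [avg, avg, hMU, sum_pstar_mul_insert hiG]
  refine sum_congr rfl fun π _ => ?_
  rw [restrict1, hcard, hMU, erase_insert hiG]

theorem avg_restrictL (w : Game) (l : List ℕ) (hl : l.Nodup) {M U : Finset ℕ}
    (hlM : l.toFinset ⊆ M) (hU : U ⊆ M \ l.toFinset) :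
    avg (M \ l.toFinset) (restrictL M w l) U = avg M w U := by
  induction l generalizing M w with
  | nil => simp only [restrictL, List.toFinset_nil, sdiff_empty]
  | cons i l ih =>
    obtain ⟨hil, hl⟩ := List.nodup_cons.mp hl
    have hiM : i ∈ M := hlM (List.mem_toFinset.mpr List.mem_cons_self)
    have hM : M \ (i :: l).toFinset = M.erase i \ l.toFinset := by
      rw [List.toFinset_cons, sdiff_insert, erase_sdiff_comm]
    rw [hM] at hU ⊢
    rw [restrictL, ih _ hl (fun x hx => ?_) hU, avg_restrict1 w hiM (hU.trans sdiff_subset)]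
    exact mem_erase.mpr ⟨fun hxi => hil (hxi ▸ List.mem_toFinset.mp hx),
      hlM (List.mem_toFinset.mpr (List.mem_cons_of_mem i (List.mem_toFinset.mp hx)))⟩

theorem avg_restrictSet (w : Game) {M T U : Finset ℕ} (hT : T ⊆ M) (hU : U ⊆ M \ T) :
    avg (M \ T) (restrictSet M w T) U = avg M w U := by
  have hsort : (T.sort (· ≤ ·)).toFinset = T := sort_toFinset T _
  have h := avg_restrictL w (T.sort (· ≤ ·)) (sort_nodup T _) (hsort ▸ hT) (hsort ▸ hU)
  rwa [hsort] at h

theorem avg_hmRed_singleton (N : Finset ℕ) (φ : Sol) (w : Game) (j : ℕ) (S : Finset ℕ) :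
    avg (N.erase j) (hmRed N φ w {j}) S
      = avg N w (insert j S) - φ (insert j S) (restrictSet N w (N \ insert j S)) j := by
  have hS : S ∪ {j} = insert j S := by rw [union_comm]; rfl
  rw [avg, avg, erase_sdiff_comm, ← sdiff_insert]
  simp only [hmRed, hS, sum_singleton, mul_sub, sum_sub_distrib, ← sum_mul, sum_pstar, one_mul]

theorem shapley_congr {N : Finset ℕ} {v v' : TUGame} {i : ℕ} (hi : i ∈ N)
    (h : ∀ T ⊆ N, v T = v' T) : shapley N v i = shapley N v' i := by
  refine sum_congr rfl fun T hT => ?_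
  have hT : T ⊆ N.erase i := mem_powerset.mp hT
  have hTN : T ⊆ N := hT.trans (erase_subset i N)
  rw [h T hTN, h (insert i T) (insert_subset hi hTN)]

end TUX

open TUX in
theorem avg_hmRed_general (N : Finset ℕ) (w : Game) (j : ℕ) (hj : j ∈ N) :
    ∀ S ⊆ N.erase j,
      avg (N.erase j) (hmRed N MPWsol w {j}) S
          = avg N w (insert j S)
            - shapley (insert j S) (avg (insert j S) (restrictSet N w (N \ insert j S))) j ∧
        avg (N.erase j) (hmRed N MPWsol w {j}) S
          = avg N w (insert j S) - shapley (insert j S) (avg N w) j := by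
  intro S hS
  have hjS : insert j S ⊆ N := insert_subset hj (hS.trans (erase_subset j N))
  have hred := avg_hmRed_singleton N MPWsol w j S
  have hcomm : ∀ T ⊆ insert j S,
      avg (insert j S) (restrictSet N w (N \ insert j S)) T = avg N w T := fun T hT => by
    have h := avg_restrictSet w sdiff_subset ((Finset.sdiff_sdiff_eq_self hjS).symm ▸ hT)
    rwa [Finset.sdiff_sdiff_eq_self hjS] at h
  exact ⟨hred, hred.trans (by rw [MPWsol, MPW, shapley_congr (mem_insert_self j S) hcomm])⟩

open TUX in
/-- The average game of the HM-reduced TUX game (w.r.t. MPW) equals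
the HM-reduced TU game of the average game (w.r.t. the Shapley value). -/
theorem avg_hmRed (N : Finset ℕ) (w : Game) (hw : IsTUX w) (j : ℕ) (hj : j ∈ N) :
    ∀ S ⊆ N.erase j,
      avg (N.erase j) (hmRed N MPWsol w {j}) S
          = avg N w (insert j S)
            - shapley (insert j S) (avg (insert j S) (restrictSet N w (N \ insert j S))) j ∧
        avg (N.erase j) (hmRed N MPWsol w {j}) S
          = avg N w (insert j S) - shapley (insert j S) (avg N w) j :=
  avg_hmRed_general N w j hj
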